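/- Discrete pressure recovery / discrete de Rham lemma (eq. (166)): assume (SgnCancel): for every primary cell i and every vertex ν, the sum of t_{e,ν}·n_{e,i} over all edges e incident to both i and ν equals 0; (Euler): card C + card V = card E + 1; (KerSkew): the only dual scalar field ψ with ∇̃⊥_h ψ = 0 is ψ = 0; and (KerGrad): every primary scalar field φ with ∇_h φ = 0 is constant. If a discrete vector field g ∈ ℝ^E satisfies (g, v)_0 = 0 for every discrete vector field v with ∇_h·v = 0, then there exists a primary discrete scalar field p such that g = ∇_h p, and p is unique up to an additive constant. -/

import Mathlib

open Finset

noncomputable section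

/-- A combinatorial staggered mesh: primary cells `C`, dual cells (vertices) `V`,
edges `E`, with areas, edge lengths, incidence relations and signs. -/
structure StagMesh (C V E : Type) [Fintype C] [Fintype V] [Fintype E]
    [DecidableEq C] [DecidableEq V] where
  /-- primary cell areas -/
  Ac : C → ℝ
  /-- dual cell areas -/
  Av : V → ℝ
  /-- primary edge lengths -/
  l : E → ℝ
  /-- dual edge lengths -/
  d : E → ℝ
  Ac_pos : ∀ i, 0 < Ac i
  Av_pos : ∀ ν, 0 < Av ν
  l_pos : ∀ e, 0 < l e
  d_pos : ∀ e, 0 < d e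
  /-- primary cells incident to an edge -/
  EC : E → Finset C
  /-- vertices (dual cells) incident to an edge -/
  EV : E → Finset V
  /-- sign `n_{e,i}` attached to an incident edge–cell pair -/
  n : E → C → ℝ
  /-- sign `t_{e,ν}` attached to an incident edge–vertex pair -/
  t : E → V → ℝ
  n_sign : ∀ e i, i ∈ EC e → n e i = 1 ∨ n e i = -1
  t_sign : ∀ e ν, ν ∈ EV e → t e ν = 1 ∨ t e ν = -1

namespace StagMesh

variable {C V E : Type} [Fintype C] [Fintype V] [Fintype E]
  [DecidableEq C] [DecidableEq V]

/-- diamond area `A_e = (1/2) l_e d_e` -/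
def Ae (M : StagMesh C V E) (e : E) : ℝ := (1 / 2) * M.l e * M.d e

/-- discrete gradient `[∇_h φ]_e = -(1/d_e) Σ_{i ~ e} n_{e,i} φ_i` -/
def grad (M : StagMesh C V E) (φ : C → ℝ) : E → ℝ :=
  fun e => -(1 / M.d e) * ∑ i ∈ M.EC e, M.n e i * φ i

/-- discrete skew gradient `[∇̃⊥_h ψ]_e = (1/l_e) Σ_{ν ~ e} t_{e,ν} ψ_ν` -/
def skewGrad (M : StagMesh C V E) (ψ : V → ℝ) : E → ℝ :=
  fun e => (1 / M.l e) * ∑ ν ∈ M.EV e, M.t e ν * ψ ν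

/-- discrete divergence `[∇_h·u]_i = (1/A_i) Σ_{e ~ i} l_e n_{e,i} u_e` -/
def dvg (M : StagMesh C V E) (u : E → ℝ) : C → ℝ :=
  fun i => (1 / M.Ac i) * ∑ e ∈ univ.filter (fun e => i ∈ M.EC e), M.l e * M.n e i * u e

/-- discrete curl `[∇̃_h×u]_ν = -(1/A_ν) Σ_{e ~ ν} d_e t_{e,ν} u_e` -/
def curl (M : StagMesh C V E) (u : E → ℝ) : V → ℝ :=
  fun ν => -(1 / M.Av ν) * ∑ e ∈ univ.filter (fun e => ν ∈ M.EV e), M.d e * M.t e ν * u e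

/-- area-weighted inner product on primary scalar fields -/
def innerC (M : StagMesh C V E) (φ φ' : C → ℝ) : ℝ := ∑ i, M.Ac i * φ i * φ' i

/-- area-weighted inner product on dual scalar fields -/
def innerV (M : StagMesh C V E) (ψ ψ' : V → ℝ) : ℝ := ∑ ν, M.Av ν * ψ ν * ψ' ν

/-- diamond-weighted inner product on discrete vector fields -/
def innerE (M : StagMesh C V E) (u u' : E → ℝ) : ℝ := ∑ e, M.Ae e * u e * u' e

/-- weighted `L²` norm on primary scalar fields -/
noncomputable def normC (M : StagMesh C V E) (φ : C → ℝ) : ℝ := Real.sqrt (M.innerC φ φ)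

/-- weighted `L²` norm on dual scalar fields -/
noncomputable def normV (M : StagMesh C V E) (ψ : V → ℝ) : ℝ := Real.sqrt (M.innerV ψ ψ)

/-- weighted `L²` norm on discrete vector fields -/
noncomputable def normE (M : StagMesh C V E) (u : E → ℝ) : ℝ := Real.sqrt (M.innerE u u)

/-- sign-cancellation condition: for every primary cell `i` and vertex `ν`,
`Σ_{e ~ i, e ~ ν} t_{e,ν} n_{e,i} = 0`. -/
def SgnCancel (M : StagMesh C V E) : Prop :=
  ∀ (i : C) (ν : V),
    ∑ e ∈ univ.filter (fun e => i ∈ M.EC e ∧ ν ∈ M.EV e), M.t e ν * M.n e i = 0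

end StagMesh

open StagMesh

/-! Summation by parts shows that, for the diamond-weighted inner product on vector fields and the
area-weighted one on primary scalar fields, `∇_h` is adjoint to `-(1/2) ∇_h·`. Both inner products
are nondegenerate diagonal forms, so the orthogonal complement of `range ∇_h` is `ker ∇_h·`, and in
finite dimension taking orthogonal complements twice returns `range ∇_h`: a field orthogonal to
every divergence-free field is a gradient. Two potentials of the same field differ by an element of
`ker ∇_h`, which consists of constants by hypothesis. -/

open LinearMap (BilinForm)

section WeightedDot

variable {K ι : Type*} [Field K] [Fintype ι] [DecidableEq ι]

def weightedDot (w : ι → K) : BilinForm K (ι → K) := Matrix.toBilin' (Matrix.diagonal w)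

theorem weightedDot_apply (w u v : ι → K) : weightedDot w u v = ∑ i, w i * u i * v i := by
  simp only [weightedDot, Matrix.toBilin'_apply', dotProduct, Matrix.mulVec_diagonal]
  exact Finset.sum_congr rfl fun i _ => by ring

theorem weightedDot_isRefl (w : ι → K) : (weightedDot w).IsRefl :=
  ((Matrix.isSymm_toBilin'_iff_isSymm).mpr (Matrix.isSymm_diagonal w)).isRefl

theorem weightedDot_nondegenerate {w : ι → K} (hw : ∀ i, w i ≠ 0) :
    (weightedDot w).Nondegenerate :=
  BilinForm.nondegenerate_toBilin'_of_det_ne_zero' _ <| by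
    rw [Matrix.det_diagonal]
    exact Finset.prod_ne_zero_iff.mpr fun i _ => hw i

end WeightedDot

namespace StagMesh

variable {C V E : Type} [Fintype C] [Fintype V] [Fintype E]
  [DecidableEq C] [DecidableEq V] (M : StagMesh C V E)

theorem Ae_pos (e : E) : 0 < M.Ae e := by
  have := M.l_pos e
  have := M.d_pos e
  unfold Ae
  positivity

theorem innerE_eq_weightedDot [DecidableEq E] (u v : E → ℝ) :
    M.innerE u v = weightedDot M.Ae u v :=
  (weightedDot_apply _ _ _).symm

theorem innerC_eq_weightedDot (φ ψ : C → ℝ) : M.innerC φ ψ = weightedDot M.Ac φ ψ :=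
  (weightedDot_apply _ _ _).symm

def gradL : (C → ℝ) →ₗ[ℝ] (E → ℝ) where
  toFun := M.grad
  map_add' φ φ' := by
    funext e
    simp only [grad, Pi.add_apply, mul_add, Finset.sum_add_distrib]
  map_smul' c φ := by
    funext e
    simp only [grad, Pi.smul_apply, smul_eq_mul, RingHom.id_apply, Finset.mul_sum]
    exact Finset.sum_congr rfl fun i _ => by ring

def dvgL : (E → ℝ) →ₗ[ℝ] (C → ℝ) where
  toFun := M.dvg
  map_add' u u' := by
    funext i
    simp only [dvg, Pi.add_apply, mul_add, Finset.sum_add_distrib]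
  map_smul' c u := by
    funext i
    simp only [dvg, Pi.smul_apply, smul_eq_mul, RingHom.id_apply, Finset.mul_sum]
    exact Finset.sum_congr rfl fun e _ => by ring

theorem grad_sub (φ φ' : C → ℝ) : M.grad (φ - φ') = M.grad φ - M.grad φ' :=
  M.gradL.map_sub φ φ'

theorem sum_sum_EC_comm (F : E → C → ℝ) :
    ∑ e, ∑ i ∈ M.EC e, F e i = ∑ i, ∑ e ∈ univ.filter (fun e => i ∈ M.EC e), F e i :=
  Finset.sum_comm' fun _ _ => by simp

theorem innerE_grad (φ : C → ℝ) (v : E → ℝ) :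
    M.innerE (M.grad φ) v = -(1 / 2) * M.innerC φ (M.dvg v) := by
  have hedge : ∀ e, M.Ae e * M.grad φ e * v e
      = ∑ i ∈ M.EC e, -(1 / 2) * M.l e * M.n e i * φ i * v e := fun e => by
    have := (M.d_pos e).ne'
    simp only [Ae, grad, Finset.mul_sum, Finset.sum_mul]
    exact Finset.sum_congr rfl fun i _ => by field_simp
  have hcell : ∀ i, M.Ac i * φ i * M.dvg v i
      = ∑ e ∈ univ.filter (fun e => i ∈ M.EC e), M.l e * M.n e i * φ i * v e := fun i => by
    have := (M.Ac_pos i).ne'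
    simp only [dvg, Finset.mul_sum]
    exact Finset.sum_congr rfl fun e _ => by field_simp
  simp only [innerE, innerC, hedge, hcell, sum_sum_EC_comm, Finset.mul_sum]
  exact Finset.sum_congr rfl fun i _ => Finset.sum_congr rfl fun e _ => by ring

theorem orthogonal_range_gradL [DecidableEq E] :
    (weightedDot M.Ae).orthogonal (LinearMap.range M.gradL) = LinearMap.ker M.dvgL := by
  ext v
  have hAc := weightedDot_nondegenerate fun i => (M.Ac_pos i).ne'
  simp only [BilinForm.mem_orthogonal_iff, LinearMap.mem_range, forall_exists_index,
    forall_apply_eq_imp_iff, LinearMap.mem_ker]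
  change (∀ φ, weightedDot M.Ae (M.grad φ) v = 0) ↔ M.dvg v = 0
  simp only [← innerE_eq_weightedDot, innerE_grad, innerC_eq_weightedDot, mul_eq_zero,
    show (-(1 / 2) : ℝ) ≠ 0 by norm_num, false_or]
  exact ⟨hAc.2 _, fun h φ => by rw [h, map_zero]⟩

theorem exists_eq_grad_of_forall_dvg_eq_zero {g : E → ℝ}
    (hg : ∀ v : E → ℝ, M.dvg v = 0 → M.innerE g v = 0) : ∃ p : C → ℝ, g = M.grad p := by
  classical
  have hAe := weightedDot_isRefl M.Ae
  have hg' : g ∈ (weightedDot M.Ae).orthogonal (LinearMap.ker M.dvgL) := fun v hv =>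
    hAe _ _ (by rw [← innerE_eq_weightedDot]; exact hg v hv)
  rw [← orthogonal_range_gradL, BilinForm.orthogonal_orthogonal
    (weightedDot_nondegenerate fun e => (M.Ae_pos e).ne') hAe] at hg'
  obtain ⟨p, hp⟩ := hg'
  exact ⟨p, hp.symm⟩

theorem exists_add_const_of_grad_eq
    (hkg : ∀ φ : C → ℝ, M.grad φ = 0 → ∀ i j : C, φ i = φ j) {p p' : C → ℝ}
    (h : M.grad p = M.grad p') : ∃ c : ℝ, ∀ i, p i = p' i + c := by
  have hconst := hkg (p - p') (by rw [grad_sub, h, sub_self])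
  rcases isEmpty_or_nonempty C with hC | ⟨⟨j⟩⟩
  · exact ⟨0, isEmptyElim⟩
  · refine ⟨p j - p' j, fun i => ?_⟩
    have := hconst i j
    simp only [Pi.sub_apply] at this
    linarith

end StagMesh

theorem pressure_recovery_general
    {C V E : Type} [Fintype C] [Fintype V] [Fintype E]
    [DecidableEq C] [DecidableEq V]
    (M : StagMesh C V E)
    (hkg : ∀ φ : C → ℝ, M.grad φ = 0 → ∀ i j : C, φ i = φ j)
    (g : E → ℝ)
    (hg : ∀ v : E → ℝ, M.dvg v = 0 → M.innerE g v = 0) :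
    (∃ p : C → ℝ, g = M.grad p) ∧
    (∀ p p' : C → ℝ, g = M.grad p → g = M.grad p' → ∃ c : ℝ, ∀ i, p i = p' i + c) :=
  ⟨M.exists_eq_grad_of_forall_dvg_eq_zero hg, fun _ _ hp hp' =>
    M.exists_add_const_of_grad_eq hkg (hp.symm.trans hp')⟩

/-- discrete pressure recovery (discrete de Rham lemma): under the
standing mesh hypotheses, if a discrete vector field `g` is orthogonal to every
divergence-free discrete vector field, then `g = ∇_h p` for some primary scalar
field `p`, unique up to an additive constant. -/
theorem pressure_recovery
    {C V E : Type} [Fintype C] [Fintype V] [Fintype E]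
    [DecidableEq C] [DecidableEq V]
    (M : StagMesh C V E)
    (hsc : M.SgnCancel)
    (heuler : Fintype.card C + Fintype.card V = Fintype.card E + 1)
    (hks : ∀ ψ : V → ℝ, M.skewGrad ψ = 0 → ψ = 0)
    (hkg : ∀ φ : C → ℝ, M.grad φ = 0 → ∀ i j : C, φ i = φ j)
    (g : E → ℝ)
    (hg : ∀ v : E → ℝ, M.dvg v = 0 → M.innerE g v = 0) :
    (∃ p : C → ℝ, g = M.grad p) ∧
    (∀ p p' : C → ℝ, g = M.grad p → g = M.grad p' → ∃ c : ℝ, ∀ i, p i = p' i + c) :=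
  pressure_recovery_general M hkg g hg
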